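/- arXiv:1104.3630 — 4 statements merged into one kernel-verified Lean document; each statement's English description precedes it below -/
import Mathlib

section
/- Let {C_k} be an equivalence n-simplex, let 1 ≤ k ≤ n, and let c, c′ ∈ A_k ∖ B_k satisfy c ≈ c′ (componentwise ∼). Then F(c) = F(c′), and for every ℓ ∈ F(c) one has d_ℓ(c), d_ℓ(c′) ∈ A_{k−1} ∖ B_{k−1} with d_ℓ(c) ≈ d_ℓ(c′). Consequently the maps D_k are well-defined on the quotient sets C_k. -/
open Finset
open scoped Classical

/-- Strictly increasing `m`-tuples with values in `[n] = {0, 1, …, n}`.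
The set `A_k` of the equivalence `n`-simplex corresponds to `Chain n (k+1)`. -/
def Chain (n m : ℕ) : Type :=
  {c : Fin m → Fin (n + 1) // StrictMono c}

/-- The `ℓ`-th face map: delete the `ℓ`-th coordinate of a tuple. -/
def face {n m : ℕ} (ℓ : Fin (m + 1)) (c : Chain n (m + 1)) : Chain n m :=
  ⟨c.1 ∘ ℓ.succAbove, c.2.comp (Fin.strictMono_succAbove ℓ)⟩

/-- The predicate `B`: some two adjacent coordinates are related by `r`. -/
def hasAdj {n : ℕ} (r : Fin (n + 1) → Fin (n + 1) → Prop) {m : ℕ} (c : Chain n m) : Prop :=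
  ∃ i j : Fin m, (i : ℕ) + 1 = (j : ℕ) ∧ r (c.1 i) (c.1 j)

/-- The componentwise relation `≈` on tuples. -/
def cApprox {n : ℕ} (r : Fin (n + 1) → Fin (n + 1) → Prop) {m : ℕ}
    (c c' : Chain n m) : Prop :=
  ∀ i, r (c.1 i) (c'.1 i)

/-- `C_k`: the quotient of `A_k ∖ B_k` by the componentwise relation `≈`. -/
def CSet (n : ℕ) (r : Fin (n + 1) → Fin (n + 1) → Prop) (k : ℕ) : Type :=
  Quot (fun c c' : {c : Chain n (k + 1) // ¬ hasAdj r c} => cApprox r c.1 c'.1)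

/-- The class `[c] ∈ C_k` of a tuple `c ∈ A_k ∖ B_k`. -/
def cls {n : ℕ} (r : Fin (n + 1) → Fin (n + 1) → Prop) {k : ℕ} (c : Chain n (k + 1))
    (hc : ¬ hasAdj r c) : CSet n r k :=
  Quot.mk _ (⟨c, hc⟩ : {c : Chain n (k + 1) // ¬ hasAdj r c})

/-- `D` is the family of differentials, `D k` being the statement's
`D_{k+1} : ℂ[C_{k+1}] → ℂ[C_k]`, given on basis elements `[c]` by
`D_{k+1}([c]) = ∑_{ℓ ∈ F(c)} (−1)^ℓ [d_ℓ(c)]`. -/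
def IsD (n : ℕ) (r : Fin (n + 1) → Fin (n + 1) → Prop)
    (D : ∀ k : ℕ, ((CSet n r (k + 1)) →₀ ℂ) →ₗ[ℂ] ((CSet n r k) →₀ ℂ)) : Prop :=
  ∀ (k : ℕ) (c : Chain n (k + 2)) (hc : ¬ hasAdj r c),
    D k (Finsupp.single (cls r c hc) 1) =
      ∑ ℓ : Fin (k + 2),
        if h : ¬ hasAdj r (face ℓ c) then
          ((-1 : ℂ) ^ (ℓ : ℕ)) • Finsupp.single (cls r (face ℓ c) h) 1
        else 0

/-- `D0` is the augmentation `D_0 : ℂ[C_0] → ℂ`, sending each basis element to `1`. -/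
def IsD0 (n : ℕ) (r : Fin (n + 1) → Fin (n + 1) → Prop)
    (D0 : ((CSet n r 0) →₀ ℂ) →ₗ[ℂ] ℂ) : Prop :=
  ∀ q : CSet n r 0, D0 (Finsupp.single q 1) = 1

section EquivalenceSimplex

variable {n : ℕ} {r : Fin (n + 1) → Fin (n + 1) → Prop}

theorem cApprox.face {m : ℕ} {a b : Chain n (m + 1)} (h : cApprox r a b) (ℓ : Fin (m + 1)) :
    cApprox r (face ℓ a) (face ℓ b) :=
  fun i => h (ℓ.succAbove i)

theorem hasAdj_congr (hr : Equivalence r) {m : ℕ} {a b : Chain n m} (h : cApprox r a b) :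
    hasAdj r a ↔ hasAdj r b := by
  constructor
  · rintro ⟨i, j, hij, hrab⟩
    exact ⟨i, j, hij, hr.trans (hr.symm (h i)) (hr.trans hrab (h j))⟩
  · rintro ⟨i, j, hij, hrab⟩
    exact ⟨i, j, hij, hr.trans (h i) (hr.trans hrab (hr.symm (h j)))⟩

variable (r) in
/-- `∑_{ℓ ∈ F(c)} (−1)^ℓ [d_ℓ(c)]`, on representatives `c` of classes in `C_{k+1}`. -/
noncomputable def faceSum {k : ℕ} (c : Chain n (k + 2)) : CSet n r k →₀ ℂ :=
  ∑ ℓ : Fin (k + 2),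
    if h : ¬ hasAdj r (face ℓ c) then
      ((-1 : ℂ) ^ (ℓ : ℕ)) • Finsupp.single (cls r (face ℓ c) h) 1
    else 0

theorem faceSum_congr (hr : Equivalence r) {k : ℕ} {a b : Chain n (k + 2)}
    (hab : cApprox r a b) : faceSum r a = faceSum r b := by
  refine Finset.sum_congr rfl fun ℓ _ => ?_
  have hface := hab.face ℓ
  by_cases ha : hasAdj r (face ℓ a)
  · rw [dif_neg (not_not.mpr ha), dif_neg (not_not.mpr ((hasAdj_congr hr hface).mp ha))]
  · have hb : ¬ hasAdj r (face ℓ b) := mt (hasAdj_congr hr hface).mpr ha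
    rw [dif_pos ha, dif_pos hb, show cls r (face ℓ a) ha = cls r (face ℓ b) hb from
      Quot.sound hface]

variable (r) in
noncomputable def CSet.faceSum (hr : Equivalence r) {k : ℕ} :
    CSet n r (k + 1) → (CSet n r k →₀ ℂ) :=
  Quot.lift (fun c => _root_.faceSum r c.1) fun _ _ => faceSum_congr hr

variable (r) in
noncomputable def differential (hr : Equivalence r) (k : ℕ) :
    (CSet n r (k + 1) →₀ ℂ) →ₗ[ℂ] (CSet n r k →₀ ℂ) :=
  Finsupp.linearCombination ℂ (CSet.faceSum r hr)

theorem differential_single (hr : Equivalence r) {k : ℕ} (c : Chain n (k + 2))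
    (hc : ¬ hasAdj r c) :
    differential r hr k (Finsupp.single (cls r c hc) 1) = faceSum r c := by
  rw [differential, Finsupp.linearCombination_single, one_smul]
  rfl

end EquivalenceSimplex

theorem stmt4_general (n : ℕ) (r : Fin (n + 1) → Fin (n + 1) → Prop) (hr : Equivalence r)
    (k : ℕ)
    (c c' : Chain n (k + 2))
    (hcc' : cApprox r c c') :
    (∀ ℓ : Fin (k + 2), ¬ hasAdj r (face ℓ c) ↔ ¬ hasAdj r (face ℓ c')) ∧
    (∀ ℓ : Fin (k + 2), ¬ hasAdj r (face ℓ c) → cApprox r (face ℓ c) (face ℓ c')) ∧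
    ∃ D : ((CSet n r (k + 1)) →₀ ℂ) →ₗ[ℂ] ((CSet n r k) →₀ ℂ),
      ∀ (b : Chain n (k + 2)) (hb : ¬ hasAdj r b),
        D (Finsupp.single (cls r b hb) 1) =
          ∑ ℓ : Fin (k + 2),
            if h : ¬ hasAdj r (face ℓ b) then
              ((-1 : ℂ) ^ (ℓ : ℕ)) • Finsupp.single (cls r (face ℓ b) h) 1
            else 0 :=
  ⟨fun ℓ => not_congr (hasAdj_congr hr (hcc'.face ℓ)),
    fun ℓ _ => hcc'.face ℓ,
    differential r hr k, differential_single hr⟩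

/-- Well-definedness of the differentials of an equivalence `n`-simplex: if
`c ≈ c'` in `A_k ∖ B_k` (here `k` is the statement's `k`, written as `k+1` with `1 ≤ k+1 ≤ n`),
then `F(c) = F(c')`, the corresponding faces satisfy `d_ℓ(c), d_ℓ(c') ∈ A_{k-1} ∖ B_{k-1}`
with `d_ℓ(c) ≈ d_ℓ(c')`; consequently the map `D_k` is well defined on `ℂ[C_k]`. -/
theorem stmt4 (n : ℕ) (r : Fin (n + 1) → Fin (n + 1) → Prop) (hr : Equivalence r)
    (hadj : ∀ i j : Fin (n + 1), r i j → (i : ℕ) ≠ (j : ℕ) + 1 ∧ (j : ℕ) ≠ (i : ℕ) + 1)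
    (k : ℕ) (hk : k + 1 ≤ n)
    (c c' : Chain n (k + 2)) (hc : ¬ hasAdj r c) (hc' : ¬ hasAdj r c')
    (hcc' : cApprox r c c') :
    (∀ ℓ : Fin (k + 2), ¬ hasAdj r (face ℓ c) ↔ ¬ hasAdj r (face ℓ c')) ∧
    (∀ ℓ : Fin (k + 2), ¬ hasAdj r (face ℓ c) → cApprox r (face ℓ c) (face ℓ c')) ∧
    ∃ D : ((CSet n r (k + 1)) →₀ ℂ) →ₗ[ℂ] ((CSet n r k) →₀ ℂ),
      ∀ (b : Chain n (k + 2)) (hb : ¬ hasAdj r b),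
        D (Finsupp.single (cls r b hb) 1) =
          ∑ ℓ : Fin (k + 2),
            if h : ¬ hasAdj r (face ℓ b) then
              ((-1 : ℂ) ^ (ℓ : ℕ)) • Finsupp.single (cls r (face ℓ b) h) 1
            else 0 :=
  stmt4_general n r hr k c c' hcc'
end

section
/- For an equivalence n-simplex {C_k}, the composite D_{k−1} ∘ D_k : ℂ[C_k] → ℂ[C_{k−2}] is the zero map for every 2 ≤ k ≤ n, and moreover D_0 ∘ D_1 = 0. Hence ⋯ → ℂ[C_k] →^{D_k} ℂ[C_{k−1}] → ⋯ → ℂ[C_0] →^{D_0} ℂ → 0 is a chain complex. -/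
open Finset
open scoped Classical

/-!
Extend `[c]` by zero to the tuples in `B_k` (`clsVec`). This extension intertwines `D` with the
alternating face sum on all of `A_k`: if `c` has `c_p ∼ c_{p+1}`, every face of `c` other than
`d_p c` and `d_{p+1} c` still lies in `B`, and these two faces are `≈`-equivalent with opposite
signs, so both sides vanish. Hence `D ∘ D = 0` reduces to the simplicial identity
`d_j ∘ d_i = d_i ∘ d_{j+1}` (`i ≤ j`), which makes the alternating double face sum cancel in pairs.
-/

section

variable {n : ℕ} {r : Fin (n + 1) → Fin (n + 1) → Prop}

lemma face_face_of_le {m : ℕ} {i j : Fin (m + 1)} (h : i ≤ j) (c : Chain n (m + 2)) :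
    face j (face i.castSucc c) = face i (face j.succ c) := by
  refine Subtype.ext (funext fun u => congrArg c.1 ?_)
  rw [Fin.le_def] at h
  simp only [Fin.ext_iff, Fin.succAbove, Fin.lt_def, Fin.val_castSucc, Fin.val_succ]
  split_ifs <;> simp only [Fin.val_castSucc, Fin.val_succ] at * <;> omega

theorem sum_neg_one_pow_smul_sum_face_face {R M : Type*} [Ring R] [AddCommGroup M] [Module R M]
    {m : ℕ} (g : Chain n m → M) (c : Chain n (m + 2)) :
    ∑ ℓ : Fin (m + 2), (-1 : R) ^ (ℓ : ℕ) •
      ∑ i : Fin (m + 1), (-1 : R) ^ (i : ℕ) • g (face i (face ℓ c)) = 0 := by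
  simp_rw [smul_sum, smul_smul, ← pow_add]
  rw [Fin.sum_sum_eq_sum_triangle_add]
  refine sum_eq_zero fun i _ => sum_eq_zero fun j hj => ?_
  rw [face_face_of_le (mem_Ici.1 hj), ← add_smul, Fin.val_castSucc, Fin.val_succ,
    add_right_comm, pow_succ, add_comm (j : ℕ)]
  simp

lemma hasAdj_of_cApprox (hr : Equivalence r) {m : ℕ} {c c' : Chain n m} (h : cApprox r c c')
    (hc : hasAdj r c) : hasAdj r c' := by
  obtain ⟨i, j, hij, hcij⟩ := hc
  exact ⟨i, j, hij, hr.trans (hr.symm (h i)) (hr.trans hcij (h j))⟩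

lemma hasAdj_face_of_ne {m : ℕ} {c : Chain n (m + 2)} {p : Fin (m + 1)}
    (hp : r (c.1 p.castSucc) (c.1 p.succ)) {ℓ : Fin (m + 2)} (h₁ : ℓ ≠ p.castSucc)
    (h₂ : ℓ ≠ p.succ) : hasAdj r (face ℓ c) := by
  obtain ⟨x, hx⟩ := Fin.exists_succAbove_eq h₁.symm
  obtain ⟨y, hy⟩ := Fin.exists_succAbove_eq h₂.symm
  refine ⟨x, y, ?_, by simpa only [face, Function.comp_apply, hx, hy] using hp⟩
  rw [Ne, Fin.ext_iff] at h₁ h₂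
  simp only [Fin.ext_iff, Fin.succAbove, Fin.lt_def, Fin.val_castSucc, Fin.val_succ] at hx hy h₁ h₂
  split_ifs at hx hy <;> simp only [Fin.val_castSucc, Fin.val_succ] at * <;> omega

lemma cApprox_face_castSucc_face_succ (hr : Equivalence r) {m : ℕ} {c : Chain n (m + 2)}
    {p : Fin (m + 1)} (hp : r (c.1 p.castSucc) (c.1 p.succ)) :
    cApprox r (face p.castSucc c) (face p.succ c) := by
  intro u
  simp only [face, Function.comp_apply]
  rcases lt_trichotomy u p with hu | rfl | hu
  · rw [Fin.succAbove_castSucc_of_lt _ _ hu, Fin.succAbove_succ_of_le _ _ hu.le]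
    exact hr.refl _
  · rw [Fin.succAbove_castSucc_self, Fin.succAbove_succ_self]
    exact hr.symm hp
  · rw [Fin.succAbove_castSucc_of_le _ _ hu.le, Fin.succAbove_succ_of_lt _ _ hu]
    exact hr.refl _

noncomputable def clsVec (r : Fin (n + 1) → Fin (n + 1) → Prop) {k : ℕ} (c : Chain n (k + 1)) :
    CSet n r k →₀ ℂ :=
  if h : hasAdj r c then 0 else Finsupp.single (cls r c h) 1

lemma clsVec_of_hasAdj {k : ℕ} {c : Chain n (k + 1)} (h : hasAdj r c) : clsVec r c = 0 :=
  dif_pos h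

lemma clsVec_of_not_hasAdj {k : ℕ} {c : Chain n (k + 1)} (h : ¬ hasAdj r c) :
    clsVec r c = Finsupp.single (cls r c h) 1 :=
  dif_neg h

lemma clsVec_eq_of_cApprox (hr : Equivalence r) {k : ℕ} {c c' : Chain n (k + 1)}
    (h : cApprox r c c') : clsVec r c = clsVec r c' := by
  by_cases hc : hasAdj r c
  · rw [clsVec_of_hasAdj hc, clsVec_of_hasAdj (hasAdj_of_cApprox hr h hc)]
  · have hc' : ¬ hasAdj r c' := fun hc' => hc (hasAdj_of_cApprox hr (fun i => hr.symm (h i)) hc')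
    rw [clsVec_of_not_hasAdj hc, clsVec_of_not_hasAdj hc']
    exact congrArg (Finsupp.single · 1) (Quot.sound h)

/-- Only the faces `d_p c` and `d_{p+1} c` can survive; they are `≈`-equivalent and carry
opposite signs. -/
lemma sum_neg_one_pow_smul_clsVec_face_of_hasAdj (hr : Equivalence r) {k : ℕ}
    {c : Chain n (k + 2)} (hc : hasAdj r c) :
    ∑ ℓ : Fin (k + 2), (-1 : ℂ) ^ (ℓ : ℕ) • clsVec r (face ℓ c) = 0 := by
  obtain ⟨i, j, hij, hcij⟩ := hc
  set p : Fin (k + 1) := ⟨i, by omega⟩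
  have hp : r (c.1 p.castSucc) (c.1 p.succ) := by
    convert hcij using 3 <;> ext <;> simp [p, hij]
  rw [Fintype.sum_eq_add p.castSucc p.succ Fin.castSucc_lt_succ.ne fun ℓ hℓ => by
      rw [clsVec_of_hasAdj (hasAdj_face_of_ne hp hℓ.1 hℓ.2), smul_zero],
    clsVec_eq_of_cApprox hr (cApprox_face_castSucc_face_succ hr hp), Fin.val_castSucc,
    Fin.val_succ, pow_succ]
  simp

lemma apply_clsVec_of_isD (hr : Equivalence r)
    {D : ∀ k : ℕ, ((CSet n r (k + 1)) →₀ ℂ) →ₗ[ℂ] ((CSet n r k) →₀ ℂ)} (hD : IsD n r D)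
    {k : ℕ} (c : Chain n (k + 2)) :
    D k (clsVec r c) = ∑ ℓ : Fin (k + 2), (-1 : ℂ) ^ (ℓ : ℕ) • clsVec r (face ℓ c) := by
  by_cases hc : hasAdj r c
  · rw [clsVec_of_hasAdj hc, map_zero, sum_neg_one_pow_smul_clsVec_face_of_hasAdj hr hc]
  · rw [clsVec_of_not_hasAdj hc, hD k c hc]
    refine sum_congr rfl fun ℓ _ => ?_
    by_cases hℓ : hasAdj r (face ℓ c)
    · rw [dif_neg (not_not_intro hℓ), clsVec_of_hasAdj hℓ, smul_zero]
    · rw [dif_pos hℓ, clsVec_of_not_hasAdj hℓ]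

lemma apply_clsVec_of_isD0 {D0 : ((CSet n r 0) →₀ ℂ) →ₗ[ℂ] ℂ} (hD0 : IsD0 n r D0)
    (c : Chain n 1) : D0 (clsVec r c) = 1 := by
  have hc : ¬ hasAdj r c := fun ⟨i, j, hij, _⟩ => by omega
  rw [clsVec_of_not_hasAdj hc, hD0 _]

lemma linearMap_ext_clsVec {M : Type*} [AddCommMonoid M] [Module ℂ M] {k : ℕ}
    {f g : (CSet n r k →₀ ℂ) →ₗ[ℂ] M}
    (h : ∀ c : Chain n (k + 1), f (clsVec r c) = g (clsVec r c)) : f = g :=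
  Finsupp.lhom_ext' fun q => LinearMap.ext_ring <| by
    obtain ⟨⟨c, hc⟩, rfl⟩ := Quot.exists_rep q
    have hfg := h c
    rw [clsVec_of_not_hasAdj hc] at hfg
    exact hfg

end

theorem stmt5_general (n : ℕ) (r : Fin (n + 1) → Fin (n + 1) → Prop) (hr : Equivalence r)
    (D : ∀ k : ℕ, ((CSet n r (k + 1)) →₀ ℂ) →ₗ[ℂ] ((CSet n r k) →₀ ℂ))
    (hD : IsD n r D)
    (D0 : ((CSet n r 0) →₀ ℂ) →ₗ[ℂ] ℂ) (hD0 : IsD0 n r D0) :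
    (∀ j : ℕ, j + 2 ≤ n → (D j).comp (D (j + 1)) = 0) ∧ D0.comp (D 0) = 0 := by
  refine ⟨fun j _ => linearMap_ext_clsVec fun c => ?_, linearMap_ext_clsVec fun c => ?_⟩
  · simp only [LinearMap.comp_apply, LinearMap.zero_apply, apply_clsVec_of_isD hr hD, map_sum,
      map_smul]
    exact sum_neg_one_pow_smul_sum_face_face _ c
  · simp only [LinearMap.comp_apply, LinearMap.zero_apply, apply_clsVec_of_isD hr hD, map_sum,
      map_smul, apply_clsVec_of_isD0 hD0]
    simp [Fin.sum_univ_two]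

/-- For an equivalence `n`-simplex, `D_{k-1} ∘ D_k = 0` for `2 ≤ k ≤ n` (below, `k = j + 2`),
and `D_0 ∘ D_1 = 0`; hence the `ℂ[C_k]` form a chain complex. -/
theorem stmt5 (n : ℕ) (r : Fin (n + 1) → Fin (n + 1) → Prop) (hr : Equivalence r)
    (hadj : ∀ i j : Fin (n + 1), r i j → (i : ℕ) ≠ (j : ℕ) + 1 ∧ (j : ℕ) ≠ (i : ℕ) + 1)
    (D : ∀ k : ℕ, ((CSet n r (k + 1)) →₀ ℂ) →ₗ[ℂ] ((CSet n r k) →₀ ℂ))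
    (hD : IsD n r D)
    (D0 : ((CSet n r 0) →₀ ℂ) →ₗ[ℂ] ℂ) (hD0 : IsD0 n r D0) :
    (∀ j : ℕ, j + 2 ≤ n → (D j).comp (D (j + 1)) = 0) ∧ D0.comp (D 0) = 0 :=
  stmt5_general n r hr D hD D0 hD0
end

section
/- For an equivalence n-simplex {C_k}, the maps h_k : ℂ[C_k] → ℂ[C_{k+1}] given on basis elements by h_k([(i_0,…,i_k)]) = [(0,i_0,…,i_k)] if 0 ≁ i_0 and h_k([(i_0,…,i_k)]) = 0 if 0 ∼ i_0, together with h_{−1} : ℂ → ℂ[C_0], h_{−1}(1) = [(0)], are well-defined and form a contracting homotopy: D_0 ∘ h_{−1} = id_ℂ, and h_{k−1} ∘ D_k + D_{k+1} ∘ h_k = id_{ℂ[C_k]} for every 0 ≤ k ≤ n (where D_{n+1} = 0). -/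
open Finset
open scoped Classical

/-- The singleton tuple `(0)`, an element of `A_0`. -/
def zeroChain (n : ℕ) : Chain n 1 :=
  ⟨fun _ => 0, fun a b hab =>
    absurd (Fin.lt_def.mp hab) (by have := a.isLt; have := b.isLt; omega)⟩

theorem zeroChain_not_hasAdj {n : ℕ} (r : Fin (n + 1) → Fin (n + 1) → Prop) :
    ¬ hasAdj r (zeroChain n) := by
  rintro ⟨i, j, hij, -⟩
  have := j.isLt
  omega

/-- `h` is the family of contracting homotopies `h_k : ℂ[C_k] → ℂ[C_{k+1}]`, given on basis
elements by `h_k([(i_0,…,i_k)]) = [(0, i_0,…,i_k)]` if `0 ≁ i_0`, and `0` if `0 ∼ i_0`. -/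
def IsH (n : ℕ) (r : Fin (n + 1) → Fin (n + 1) → Prop)
    (h : ∀ k : ℕ, ((CSet n r k) →₀ ℂ) →ₗ[ℂ] ((CSet n r (k + 1)) →₀ ℂ)) : Prop :=
  ∀ (k : ℕ) (c : Chain n (k + 1)) (hc : ¬ hasAdj r c),
    (r 0 (c.1 0) → h k (Finsupp.single (cls r c hc) 1) = 0) ∧
    (¬ r 0 (c.1 0) →
      ∃ (hm : StrictMono (Fin.cons (0 : Fin (n + 1)) c.1))
        (hB : ¬ hasAdj r (⟨Fin.cons (0 : Fin (n + 1)) c.1, hm⟩ : Chain n (k + 2))),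
        h k (Finsupp.single (cls r c hc) 1) =
          Finsupp.single (cls r ⟨Fin.cons (0 : Fin (n + 1)) c.1, hm⟩ hB) 1)

/-- `h₋₁ : ℂ → ℂ[C_0]` sends `1` to the class of the singleton tuple `(0)`. -/
def IsHneg (n : ℕ) (r : Fin (n + 1) → Fin (n + 1) → Prop)
    (hneg : ℂ →ₗ[ℂ] ((CSet n r 0) →₀ ℂ)) : Prop :=
  hneg 1 = Finsupp.single (cls r (zeroChain n) (zeroChain_not_hasAdj r)) 1

/-!
Prepending the cone point `0` is a contracting homotopy. If `0 ≁ i_0`, the `0`-th face of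
`(0, i_0, …, i_k)` is `(i_0, …, i_k)` and its other faces are the cones on the faces of
`(i_0, …, i_k)`, which cancel against `h ∘ D`. If `0 ∼ i_0`, then `h` kills `(i_0, …, i_k)` and
all of its faces except the `0`-th, whose cone `(0, i_1, …, i_k)` is `≈`-equivalent to
`(i_0, …, i_k)`.
-/

section EquivalenceSimplex

variable {n : ℕ} {r : Fin (n + 1) → Fin (n + 1) → Prop}

lemma hasAdj_iff_exists_succ {m : ℕ} (c : Chain n (m + 1)) :
    hasAdj r c ↔ ∃ i : Fin m, r (c.1 i.castSucc) (c.1 i.succ) := by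
  constructor
  · rintro ⟨i, j, hij, h⟩
    have hj : j = (⟨i, by omega⟩ : Fin m).succ := Fin.ext (by simp [← hij])
    exact ⟨⟨i, by omega⟩, hj ▸ h⟩
  · rintro ⟨i, h⟩
    exact ⟨i.castSucc, i.succ, by simp, h⟩

lemma hasAdj_cons_iff {m : ℕ} {a : Fin (n + 1)} {f : Fin (m + 1) → Fin (n + 1)}
    (ha : StrictMono (Fin.cons a f : Fin (m + 2) → Fin (n + 1))) (hf : StrictMono f) :
    hasAdj r (⟨Fin.cons a f, ha⟩ : Chain n (m + 2)) ↔
      r a (f 0) ∨ hasAdj r (⟨f, hf⟩ : Chain n (m + 1)) := by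
  refine ((hasAdj_iff_exists_succ _).trans ?_).trans
    (or_congr Iff.rfl (hasAdj_iff_exists_succ _).symm)
  simp [Fin.exists_fin_succ]

variable (r) in
/-- The tuples of `A_k ∖ B_k`. -/
def IsAdmissible {m : ℕ} (f : Fin m → Fin (n + 1)) : Prop :=
  ∃ hf : StrictMono f, ¬ hasAdj r ⟨f, hf⟩

lemma isAdmissible_cons_iff {m : ℕ} {a : Fin (n + 1)} {f : Fin (m + 1) → Fin (n + 1)} :
    IsAdmissible r (Fin.cons a f : Fin (m + 2) → Fin (n + 1)) ↔
      a < f 0 ∧ ¬ r a (f 0) ∧ IsAdmissible r f := by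
  constructor
  · rintro ⟨ha, hna⟩
    obtain ⟨hlt, hf⟩ := strictMono_vecCons.1 ha
    rw [hasAdj_cons_iff ha hf, not_or] at hna
    exact ⟨hlt, hna.1, hf, hna.2⟩
  · rintro ⟨hlt, hra, hf, hna⟩
    have ha : StrictMono (Fin.cons a f : Fin (m + 2) → Fin (n + 1)) :=
      strictMono_vecCons.2 ⟨hlt, hf⟩
    exact ⟨ha, by rw [hasAdj_cons_iff ha hf]; tauto⟩

variable (r) in
/-- The basis vector `[f]` of `ℂ[C_k]` when `f ∈ A_k ∖ B_k`, and `0` for every other tuple. -/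
noncomputable def classVec {k : ℕ} (f : Fin (k + 1) → Fin (n + 1)) : CSet n r k →₀ ℂ :=
  if hf : IsAdmissible r f then Finsupp.single (cls r ⟨f, hf.fst⟩ hf.snd) 1 else 0

lemma classVec_of_isAdmissible {k : ℕ} {f : Fin (k + 1) → Fin (n + 1)}
    (hf : IsAdmissible r f) : classVec r f = Finsupp.single (cls r ⟨f, hf.fst⟩ hf.snd) 1 :=
  dif_pos hf

lemma classVec_of_not_isAdmissible {k : ℕ} {f : Fin (k + 1) → Fin (n + 1)}
    (hf : ¬ IsAdmissible r f) : classVec r f = 0 :=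
  dif_neg hf

lemma classVec_congr (hr : Equivalence r) {k : ℕ} {f g : Fin (k + 1) → Fin (n + 1)}
    (hf : IsAdmissible r f) (hg : StrictMono g) (hfg : ∀ i, r (f i) (g i)) :
    classVec r g = classVec r f := by
  have hg' : IsAdmissible r g := ⟨hg, fun ⟨i, j, hij, h⟩ =>
    hf.snd ⟨i, j, hij, hr.trans (hfg i) (hr.trans h (hr.symm (hfg j)))⟩⟩
  rw [classVec_of_isAdmissible hf, classVec_of_isAdmissible hg']
  exact congrArg (Finsupp.single · 1) (Quot.sound fun i => hr.symm (hfg i))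

lemma classVec_cons_zero_of_rel {k : ℕ} {f : Fin (k + 1) → Fin (n + 1)} (h : r 0 (f 0)) :
    classVec r (Fin.cons 0 f : Fin (k + 2) → Fin (n + 1)) = 0 :=
  classVec_of_not_isAdmissible fun hf => (isAdmissible_cons_iff.1 hf).2.1 h

lemma isAdmissible_cons_zero (hr : Equivalence r) {k : ℕ} {f : Fin (k + 1) → Fin (n + 1)}
    (hf : IsAdmissible r f) (h : ¬ r 0 (f 0)) :
    IsAdmissible r (Fin.cons 0 f : Fin (k + 2) → Fin (n + 1)) := by
  refine isAdmissible_cons_iff.2 ⟨Fin.pos_of_ne_zero fun h0 => h ?_, h, hf⟩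
  rw [h0]
  exact hr.refl 0

lemma classVec_cons_zero_congr (hr : Equivalence r) {k : ℕ} {c c' : Chain n (k + 1)}
    (hc : ¬ hasAdj r c) (hcc' : cApprox r c c') :
    classVec r (Fin.cons 0 c.1 : Fin (k + 2) → Fin (n + 1)) = classVec r (Fin.cons 0 c'.1) := by
  by_cases h : r 0 (c.1 0)
  · rw [classVec_cons_zero_of_rel h, classVec_cons_zero_of_rel (hr.trans h (hcc' 0))]
  · have hc' : 0 < c'.1 0 := Fin.pos_of_ne_zero fun h0 => h (h0 ▸ hr.symm (hcc' 0))
    refine (classVec_congr hr (isAdmissible_cons_zero hr ⟨c.2, hc⟩ h)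
      (strictMono_vecCons.2 ⟨hc', c'.2⟩) ?_).symm
    exact Fin.cases (hr.refl 0) hcc'

variable (r) in
noncomputable def homotopy (hr : Equivalence r) (k : ℕ) :
    (CSet n r k →₀ ℂ) →ₗ[ℂ] (CSet n r (k + 1) →₀ ℂ) :=
  Finsupp.linearCombination ℂ <| Quot.lift (fun c => classVec r (Fin.cons 0 c.1.1))
    fun c _ => classVec_cons_zero_congr hr c.2

lemma homotopy_classVec (hr : Equivalence r) {k : ℕ} (f : Fin (k + 1) → Fin (n + 1)) :
    homotopy r hr k (classVec r f) = classVec r (Fin.cons 0 f) := by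
  by_cases hf : IsAdmissible r f
  · rw [classVec_of_isAdmissible hf]
    exact (Finsupp.linearCombination_single ℂ _ _).trans (one_smul ℂ _)
  · rw [classVec_of_not_isAdmissible hf, map_zero,
      classVec_of_not_isAdmissible fun h => hf (isAdmissible_cons_iff.1 h).2.2]

lemma IsD.map_classVec {D : ∀ k : ℕ, (CSet n r (k + 1) →₀ ℂ) →ₗ[ℂ] (CSet n r k →₀ ℂ)}
    (hD : IsD n r D) {k : ℕ} {f : Fin (k + 2) → Fin (n + 1)} (hf : IsAdmissible r f) :
    D k (classVec r f) =
      ∑ ℓ : Fin (k + 2), (-1 : ℂ) ^ (ℓ : ℕ) • classVec r (ℓ.removeNth f) := by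
  rw [classVec_of_isAdmissible hf, hD k ⟨f, hf.fst⟩ hf.snd]
  refine sum_congr rfl fun ℓ _ => ?_
  by_cases h : hasAdj r (face ℓ ⟨f, hf.fst⟩)
  · rw [dif_neg (not_not_intro h),
      classVec_of_not_isAdmissible (f := ℓ.removeNth f) fun h' => h'.snd h, smul_zero]
  · rw [dif_pos h, classVec_of_isAdmissible (f := ℓ.removeNth f) ⟨_, h⟩]
    rfl

lemma IsD.map_classVec_cons {D : ∀ k : ℕ, (CSet n r (k + 1) →₀ ℂ) →ₗ[ℂ] (CSet n r k →₀ ℂ)}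
    (hD : IsD n r D) {k : ℕ} {a : Fin (n + 1)} {f : Fin (k + 1) → Fin (n + 1)}
    (hf : IsAdmissible r (Fin.cons a f : Fin (k + 2) → Fin (n + 1))) :
    D k (classVec r (Fin.cons a f)) =
      classVec r f - ∑ ℓ : Fin (k + 1), (-1 : ℂ) ^ (ℓ : ℕ) •
        classVec r (Fin.cons a (ℓ.removeNth f) : Fin (k + 1) → Fin (n + 1)) := by
  have hface (ℓ : Fin (k + 1)) : ℓ.succ.removeNth (Fin.cons a f : Fin (k + 2) → Fin (n + 1)) =
      (Fin.cons a (ℓ.removeNth f) : Fin (k + 1) → Fin (n + 1)) :=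
    Fin.cons_comp_succ_succAbove a f ℓ
  rw [hD.map_classVec hf, Fin.sum_univ_succ]
  simp [hface, pow_succ, sub_eq_add_neg]

lemma IsD0.map_classVec {D0 : (CSet n r 0 →₀ ℂ) →ₗ[ℂ] ℂ} (hD0 : IsD0 n r D0)
    {f : Fin 1 → Fin (n + 1)} (hf : IsAdmissible r f) : D0 (classVec r f) = 1 := by
  rw [classVec_of_isAdmissible hf, hD0]

lemma ext_classVec {M : Type*} [AddCommMonoid M] [Module ℂ M] {k : ℕ}
    {φ ψ : (CSet n r k →₀ ℂ) →ₗ[ℂ] M}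
    (h : ∀ f : Fin (k + 1) → Fin (n + 1), IsAdmissible r f →
      φ (classVec r f) = ψ (classVec r f)) :
    φ = ψ := by
  refine Finsupp.lhom_ext' fun q => LinearMap.ext_ring ?_
  induction q using Quot.ind with
  | mk c =>
    have hc := h c.1.1 ⟨c.1.2, c.2⟩
    rwa [classVec_of_isAdmissible ⟨c.1.2, c.2⟩] at hc

lemma isH_homotopy (hr : Equivalence r) : IsH n r (homotopy r hr) := by
  intro k c hc
  have hv := homotopy_classVec hr c.1
  rw [classVec_of_isAdmissible ⟨c.2, hc⟩] at hv
  refine ⟨fun h0 => hv.trans (classVec_cons_zero_of_rel h0), fun h0 => ?_⟩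
  have hcons := isAdmissible_cons_zero hr ⟨c.2, hc⟩ h0
  exact ⟨hcons.fst, hcons.snd, hv.trans (classVec_of_isAdmissible hcons)⟩

lemma homotopy_D_add_D_homotopy (hr : Equivalence r)
    {D : ∀ k : ℕ, (CSet n r (k + 1) →₀ ℂ) →ₗ[ℂ] (CSet n r k →₀ ℂ)} (hD : IsD n r D) {k : ℕ}
    {f : Fin (k + 2) → Fin (n + 1)} (hf : IsAdmissible r f) :
    homotopy r hr k (D k (classVec r f)) + D (k + 1) (homotopy r hr (k + 1) (classVec r f)) =
      classVec r f := by
  simp only [hD.map_classVec hf, map_sum, map_smul, homotopy_classVec]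
  by_cases h0 : r 0 (f 0)
  · have hface (ℓ : Fin (k + 1)) : classVec r (Fin.cons 0 (ℓ.succ.removeNth f)) = 0 :=
      classVec_cons_zero_of_rel (by simpa [Fin.removeNth] using h0)
    have htail : StrictMono (Fin.cons 0 (Fin.tail f) : Fin (k + 2) → Fin (n + 1)) :=
      strictMono_vecCons.2 ⟨(Fin.zero_le _).trans_lt (hf.fst Fin.zero_lt_one),
        hf.fst.comp Fin.strictMono_succ⟩
    rw [classVec_cons_zero_of_rel h0, map_zero, add_zero, Fin.sum_univ_succ]
    simp only [hface, smul_zero, sum_const_zero, add_zero, Fin.removeNth_zero, Fin.val_zero,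
      pow_zero, one_smul]
    exact classVec_congr hr hf htail (Fin.cases (hr.symm h0) fun i => hr.refl _)
  · rw [hD.map_classVec_cons (isAdmissible_cons_zero hr hf h0), add_sub_cancel]

lemma classVec_zeroChain_add_D_homotopy (hr : Equivalence r)
    {D : ∀ k : ℕ, (CSet n r (k + 1) →₀ ℂ) →ₗ[ℂ] (CSet n r k →₀ ℂ)} (hD : IsD n r D)
    {f : Fin 1 → Fin (n + 1)} (hf : IsAdmissible r f) :
    classVec r (zeroChain n).1 + D 0 (homotopy r hr 0 (classVec r f)) = classVec r f := by
  rw [homotopy_classVec]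
  by_cases h0 : r 0 (f 0)
  · rw [classVec_cons_zero_of_rel h0, map_zero, add_zero]
    exact classVec_congr hr hf (zeroChain n).2 fun i => Fin.fin_one_eq_zero i ▸ hr.symm h0
  · have hz : (Fin.cons 0 ((0 : Fin 1).removeNth f) : Fin 1 → Fin (n + 1)) = (zeroChain n).1 :=
      funext fun i => by rw [Fin.fin_one_eq_zero i]; rfl
    rw [hD.map_classVec_cons (isAdmissible_cons_zero hr hf h0), Fin.sum_univ_one, hz]
    simp

end EquivalenceSimplex

/-- `D_{n+1} = 0` holds automatically since `C_{n+1}` is empty; the case `k = 0` of the homotopy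
identity is stated separately, and `k = j + 1` covers `1 ≤ k ≤ n`. -/
theorem stmt7_general (n : ℕ) (r : Fin (n + 1) → Fin (n + 1) → Prop) (hr : Equivalence r)
    (D : ∀ k : ℕ, ((CSet n r (k + 1)) →₀ ℂ) →ₗ[ℂ] ((CSet n r k) →₀ ℂ))
    (hD : IsD n r D)
    (D0 : ((CSet n r 0) →₀ ℂ) →ₗ[ℂ] ℂ) (hD0 : IsD0 n r D0) :
    ∃ (h : ∀ k : ℕ, ((CSet n r k) →₀ ℂ) →ₗ[ℂ] ((CSet n r (k + 1)) →₀ ℂ))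
      (hneg : ℂ →ₗ[ℂ] ((CSet n r 0) →₀ ℂ)),
      IsH n r h ∧ IsHneg n r hneg ∧
      D0.comp hneg = LinearMap.id ∧
      hneg.comp D0 + (D 0).comp (h 0) = LinearMap.id ∧
      ∀ j : ℕ, j + 1 ≤ n →
        (h j).comp (D j) + (D (j + 1)).comp (h (j + 1)) = LinearMap.id := by
  have hzero : IsAdmissible r (zeroChain n).1 := ⟨(zeroChain n).2, zeroChain_not_hasAdj r⟩
  refine ⟨homotopy r hr, LinearMap.toSpanSingleton ℂ _ (classVec r (zeroChain n).1),
    isH_homotopy hr, ?_, ?_, ?_, fun j _ => ?_⟩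
  · rw [IsHneg, LinearMap.toSpanSingleton_apply, one_smul]
    exact classVec_of_isAdmissible hzero
  · exact LinearMap.ext_ring (by simp [hD0.map_classVec hzero])
  · refine ext_classVec fun f hf => ?_
    simpa [hD0.map_classVec hf] using classVec_zeroChain_add_D_homotopy hr hD hf
  · exact ext_classVec fun f hf => homotopy_D_add_D_homotopy hr hD hf

/-- The maps `h_k` and `h₋₁` are well defined and form a contracting homotopy:
`D_0 ∘ h₋₁ = id` and `h_{k-1} ∘ D_k + D_{k+1} ∘ h_k = id` for `0 ≤ k ≤ n`
(below, the case `k = 0` is stated separately and `k = j + 1` for `1 ≤ k ≤ n`;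
`D_{n+1} = 0` automatically since `C_{n+1}` is empty). -/
theorem stmt7 (n : ℕ) (r : Fin (n + 1) → Fin (n + 1) → Prop) (hr : Equivalence r)
    (hadj : ∀ i j : Fin (n + 1), r i j → (i : ℕ) ≠ (j : ℕ) + 1 ∧ (j : ℕ) ≠ (i : ℕ) + 1)
    (D : ∀ k : ℕ, ((CSet n r (k + 1)) →₀ ℂ) →ₗ[ℂ] ((CSet n r k) →₀ ℂ))
    (hD : IsD n r D)
    (D0 : ((CSet n r 0) →₀ ℂ) →ₗ[ℂ] ℂ) (hD0 : IsD0 n r D0) :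
    ∃ (h : ∀ k : ℕ, ((CSet n r k) →₀ ℂ) →ₗ[ℂ] ((CSet n r (k + 1)) →₀ ℂ))
      (hneg : ℂ →ₗ[ℂ] ((CSet n r 0) →₀ ℂ)),
      IsH n r h ∧ IsHneg n r hneg ∧
      D0.comp hneg = LinearMap.id ∧
      hneg.comp D0 + (D 0).comp (h 0) = LinearMap.id ∧
      ∀ j : ℕ, j + 1 ≤ n →
        (h j).comp (D j) + (D (j + 1)).comp (h (j + 1)) = LinearMap.id :=
  stmt7_general n r hr D hD D0 hD0
end

section
/- For an equivalence n-simplex {C_k}, the reduced Euler characteristic vanishes: Σ_{k=0}^{n} (−1)^k #C_k = 1, where #C_k denotes the (finite) cardinality of C_k. -/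
open Finset
open scoped Classical

/-!
Split `C_k` according to whether the first entry of a class is `∼ 0`, and let `a_k` count the
classes whose first entry is. Deleting the first entry maps the classes of `C_{k+1}` with first
entry `∼ 0` bijectively onto the classes of `C_k` with first entry `≁ 0`; the inverse prepends `0`,
which creates no adjacent related pair precisely because the old first entry is `≁ 0`. Hence
`#C_k = a_k + a_{k+1}`, and the alternating sum telescopes to `a_0 - (-1)^(n+1) a_{n+1} = 1 - 0`:
`C_0` has exactly one class `∼ 0`, and `C_{n+1}` is empty.
-/

theorem Finset.sum_range_alternating_add_succ {R : Type*} [CommRing R] (a : ℕ → R) (N : ℕ) :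
    ∑ k ∈ range N, (-1 : R) ^ k * (a k + a (k + 1)) = a 0 - (-1) ^ N * a N := by
  have := sum_range_sub' (fun k => (-1 : R) ^ k * a k) N
  simp only [pow_zero, one_mul] at this
  rw [← this]
  exact sum_congr rfl fun k _ => by ring

namespace Chain

variable {n : ℕ}

instance (m : ℕ) : Finite (Chain n m) :=
  inferInstanceAs (Finite {c : Fin m → Fin (n + 1) // StrictMono c})

theorem isEmpty_of_lt {m : ℕ} (h : n + 1 < m) : IsEmpty (Chain n m) :=
  ⟨fun c => (Fintype.card_le_of_injective c.1 c.2.injective).not_gt (by simpa using h)⟩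

def tail {m : ℕ} (c : Chain n (m + 1)) : Chain n m :=
  ⟨Fin.tail c.1, c.2.comp Fin.strictMono_succ⟩

def cons {m : ℕ} (c : Chain n (m + 1)) (h : c.1 0 ≠ 0) : Chain n (m + 2) :=
  ⟨Fin.cons 0 c.1, Fin.strictMono_cons.2
    ⟨fun j => (Fin.pos_iff_ne_zero.2 h).trans_le (c.2.monotone (Fin.zero_le j)), c.2⟩⟩

variable {r : Fin (n + 1) → Fin (n + 1) → Prop}

theorem not_hasAdj_tail {m : ℕ} {c : Chain n (m + 1)} (hc : ¬ hasAdj r c) :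
    ¬ hasAdj r c.tail :=
  fun ⟨i, j, hij, hrel⟩ => hc ⟨i.succ, j.succ, by simp [hij], hrel⟩

theorem hasAdj_cons_iff {m : ℕ} (c : Chain n (m + 1)) (h : c.1 0 ≠ 0) :
    hasAdj r (c.cons h) ↔ r 0 (c.1 0) ∨ hasAdj r c := by
  constructor
  · rintro ⟨i, j, hij, hrel⟩
    cases i using Fin.cases with
    | zero =>
      obtain rfl : j = 1 := Fin.ext (by simpa using hij.symm)
      exact Or.inl hrel
    | succ i =>
      cases j using Fin.cases with
      | zero => simp at hij
      | succ j => exact Or.inr ⟨i, j, by simpa using hij, hrel⟩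
  · rintro (hrel | ⟨i, j, hij, hrel⟩)
    · exact ⟨0, 1, rfl, hrel⟩
    · exact ⟨i.succ, j.succ, by simp [hij], hrel⟩

end Chain

section Classes

variable {n : ℕ} {r : Fin (n + 1) → Fin (n + 1) → Prop}

instance (k : ℕ) : Finite (CSet n r k) := Quot.finite _

theorem cls_eq_cls_iff (hr : Equivalence r) {k : ℕ} {c c' : Chain n (k + 1)}
    (hc : ¬ hasAdj r c) (hc' : ¬ hasAdj r c') :
    cls r c hc = cls r c' hc' ↔ cApprox r c c' := by
  have hequiv : Equivalence fun c c' : {c : Chain n (k + 1) // ¬ hasAdj r c} =>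
      cApprox r c.1 c'.1 :=
    ⟨fun _ _ => hr.refl _, fun h i => hr.symm (h i), fun h h' i => hr.trans (h i) (h' i)⟩
  exact ⟨fun h => hequiv.eqvGen_iff.1 (Quot.eqvGen_exact h), fun h => Quot.sound h⟩

-- Phrased through some representative, so that it is defined before `r` is known to be an
-- equivalence; `headSimZero_cls_iff` shows that every representative then qualifies.
def HeadSimZero {k : ℕ} (q : CSet n r k) : Prop :=
  ∃ c hc, cls r c hc = q ∧ r (c.1 0) 0

theorem headSimZero_cls_iff (hr : Equivalence r) {k : ℕ} {c : Chain n (k + 1)}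
    (hc : ¬ hasAdj r c) : HeadSimZero (cls r c hc) ↔ r (c.1 0) 0 := by
  refine ⟨fun ⟨c', hc', h, h0⟩ => ?_, fun h => ⟨c, hc, rfl, h⟩⟩
  exact hr.trans (hr.symm ((cls_eq_cls_iff hr hc' hc).1 h 0)) h0

def tailCls {k : ℕ} : CSet n r (k + 1) → CSet n r k :=
  Quot.map (fun c => ⟨c.1.tail, Chain.not_hasAdj_tail c.2⟩) fun _ _ h i => h i.succ

theorem tailCls_cls {k : ℕ} (c : Chain n (k + 2)) (hc : ¬ hasAdj r c) :
    tailCls (cls r c hc) = cls r c.tail (Chain.not_hasAdj_tail hc) := rfl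

theorem not_headSimZero_tailCls (hr : Equivalence r) {k : ℕ} {q : CSet n r (k + 1)}
    (hq : HeadSimZero q) : ¬ HeadSimZero (tailCls q) := by
  obtain ⟨c, hc, rfl, h0⟩ := hq
  rw [tailCls_cls, headSimZero_cls_iff hr]
  exact fun h1 => hc ⟨0, 1, rfl, hr.trans h0 (hr.symm h1)⟩

theorem bijective_tailCls (hr : Equivalence r) (k : ℕ) :
    Function.Bijective (Subtype.map tailCls fun _ => not_headSimZero_tailCls hr :
      {q : CSet n r (k + 1) // HeadSimZero q} → {q : CSet n r k // ¬ HeadSimZero q}) := by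
  constructor
  · rintro ⟨_, c, hc, rfl, h0⟩ ⟨_, c', hc', rfl, h0'⟩ h
    have htail := (cls_eq_cls_iff hr _ _).1 (congrArg Subtype.val h)
    refine Subtype.ext ((cls_eq_cls_iff hr hc hc').2 fun i => ?_)
    cases i using Fin.cases with
    | zero => exact hr.trans h0 (hr.symm h0')
    | succ i => exact htail i
  · rintro ⟨q, hq⟩
    obtain ⟨⟨c, hc⟩, rfl⟩ := Quot.exists_rep q
    have h0 : ¬ r (c.1 0) 0 := fun h => hq ((headSimZero_cls_iff hr hc).2 h)
    have hne : c.1 0 ≠ 0 := fun h => h0 (h ▸ hr.refl _)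
    have hcons : ¬ hasAdj r (c.cons hne) := by
      rw [Chain.hasAdj_cons_iff]
      exact fun h => h.elim (fun h => h0 (hr.symm h)) hc
    exact ⟨⟨cls r _ hcons, (headSimZero_cls_iff hr hcons).2 (hr.refl 0)⟩, rfl⟩

theorem card_cSet (hr : Equivalence r) (k : ℕ) :
    Nat.card (CSet n r k) =
      Nat.card {q : CSet n r k // HeadSimZero q} +
        Nat.card {q : CSet n r (k + 1) // HeadSimZero q} := by
  rw [← Nat.card_congr (Equiv.sumCompl HeadSimZero), Nat.card_sum,
    Nat.card_eq_of_bijective _ (bijective_tailCls hr k)]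

theorem card_headSimZero_zero (hr : Equivalence r) :
    Nat.card {q : CSet n r 0 // HeadSimZero q} = 1 := by
  have hc : ¬ hasAdj r (⟨fun _ => 0, Subsingleton.strictMono _⟩ : Chain n 1) :=
    fun ⟨i, j, hij, _⟩ => by omega
  refine Nat.card_eq_one_iff_exists.2
    ⟨⟨cls r _ hc, (headSimZero_cls_iff hr hc).2 (hr.refl 0)⟩, ?_⟩
  rintro ⟨_, c, hc', rfl, h0⟩
  refine Subtype.ext ((cls_eq_cls_iff hr hc' hc).2 fun i => ?_)
  rwa [Subsingleton.elim (α := Fin 1) i 0]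

theorem isEmpty_cSet_of_lt {k : ℕ} (h : n < k) : IsEmpty (CSet n r k) :=
  ⟨fun q => q.rec (fun c => (Chain.isEmpty_of_lt (by omega)).false c.1) fun _ _ _ => rfl⟩

end Classes

theorem stmt9_general (n : ℕ) (r : Fin (n + 1) → Fin (n + 1) → Prop) (hr : Equivalence r) :
    ∑ k ∈ Finset.range (n + 1), (-1 : ℤ) ^ k * Nat.card (CSet n r k) = 1 := by
  have hempty : IsEmpty (CSet n r (n + 1)) := isEmpty_cSet_of_lt (Nat.lt_succ_self n)
  simp_rw [card_cSet hr, Nat.cast_add, sum_range_alternating_add_succ, card_headSimZero_zero hr,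
    Nat.card_of_isEmpty]
  simp

/-- The reduced Euler characteristic of an equivalence `n`-simplex vanishes:
`∑_{k=0}^{n} (−1)^k #C_k = 1`. -/
theorem stmt9 (n : ℕ) (r : Fin (n + 1) → Fin (n + 1) → Prop) (hr : Equivalence r)
    (hadj : ∀ i j : Fin (n + 1), r i j → (i : ℕ) ≠ (j : ℕ) + 1 ∧ (j : ℕ) ≠ (i : ℕ) + 1) :
    ∑ k ∈ Finset.range (n + 1), (-1 : ℤ) ^ k * Nat.card (CSet n r k) = 1 :=
  stmt9_general n r hr
end
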